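/- Every connected induced subgraph of the ladder graph Q_n can be constructed recursively by pasting along complete subgraphs (single vertices or single edges), starting from single vertices, single edges, and subsquares (induced 4-cycles); moreover, if two subsquares of an induced subgraph intersect nontrivially, they intersect in a common edge, and if a subsquare and a maximal edge not contained in any subsquare intersect, they intersect in a single vertex. -/

import Mathlib

/-- The ladder graph `Q_n` (a row of `n` squares), 0-indexed. -/
def ladderGraph (n : ℕ) : SimpleGraph (Fin (2 * (n + 1))) :=
  SimpleGraph.fromRel (fun a b =>
    (∃ i, 1 ≤ i ∧ i ≤ n ∧
      (((a : ℕ) = 2 * i - 2 ∧ (b : ℕ) = 2 * i) ∨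
       ((a : ℕ) = 2 * i - 1 ∧ (b : ℕ) = 2 * i + 1))) ∨
    (∃ i, 1 ≤ i ∧ i ≤ n + 1 ∧ (a : ℕ) = 2 * i - 2 ∧ (b : ℕ) = 2 * i - 1))

/-- `IsSubsquare G T`: the induced subgraph of `G` on `T` is a 4-cycle. -/
def IsSubsquare {V : Type*} (G : SimpleGraph V) (T : Set V) : Prop :=
  Nonempty (G.induce T ≃g SimpleGraph.cycleGraph 4)

/-- Induced subgraphs (given by their vertex sets) of an ambient graph `G` that can
be constructed recursively by pasting along complete subgraphs (a single vertex or a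
single edge), starting from single vertices, single edges and subsquares. -/
inductive PastingConstructible {V : Type*} (G : SimpleGraph V) : Set V → Prop
  | vertex (v : V) : PastingConstructible G {v}
  | edge {u v : V} (h : G.Adj u v) : PastingConstructible G {u, v}
  | square (S : Set V) (h : IsSubsquare G S) : PastingConstructible G S
  | paste (S₁ S₂ : Set V)
      (h₁ : PastingConstructible G S₁) (h₂ : PastingConstructible G S₂)
      (hcomplete : (∃ v, S₁ ∩ S₂ = {v}) ∨ (∃ u v, G.Adj u v ∧ S₁ ∩ S₂ = {u, v}))
      (hcross : ∀ a ∈ S₁ \ S₂, ∀ b ∈ S₂ \ S₁, ¬ G.Adj a b) :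
      PastingConstructible G (S₁ ∪ S₂)

/-!
A connected induced subgraph `S` of the ladder is peeled from the right. If `S` has a leaf, it is
pasted along its neighbour onto the rest. Otherwise every vertex has two neighbours in `S`; then
the rightmost vertex is `2m+3`, which forces the whole square `{2m, …, 2m+3}` into `S`, and `S` is
that square pasted along the rung `{2m, 2m+1}` onto the part of `S` left of the rung `m + 1`. In
both cases the remainder stays connected, being a retract of `S`: the removed vertices fold onto
neighbours.

Every 4-cycle of the ladder is one of these squares, so two distinct subsquares that meet are
consecutive and share a rung. An edge lying in no subsquare of `S` is not contained in `T`, so it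
meets `T` in at most one vertex.
-/

open SimpleGraph

section Pasting

variable {V : Type*} {G : SimpleGraph V}

theorem SimpleGraph.induce_connected_of_retraction {S R : Set V} (f : V → V)
    (hmaps : ∀ x ∈ S, f x ∈ R) (hfix : ∀ x ∈ R, f x = x) (hRS : R ⊆ S)
    (hadj : ∀ x ∈ S, ∀ y ∈ S, G.Adj x y → f x = f y ∨ G.Adj (f x) (f y))
    (hS : (G.induce S).Connected) : (G.induce R).Connected := by
  let g : S → R := fun x => ⟨f x, hmaps x x.2⟩
  have hg : ∀ x y : S, (G.induce S).Reachable x y → (G.induce R).Reachable (g x) (g y) := by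
    intro x y h
    rw [reachable_iff_reflTransGen] at h ⊢
    refine Relation.ReflTransGen.lift' g (fun a b hab => ?_) _ _ h
    rcases hadj a a.2 b b.2 hab with e | e
    · change Relation.ReflTransGen _ (g a) (g b)
      rw [show g a = g b from Subtype.ext e]
    · exact Relation.ReflTransGen.single e
  obtain ⟨x₀⟩ := hS.nonempty
  have : Nonempty R := ⟨g x₀⟩
  refine ⟨fun a b => ?_⟩
  have e : ∀ c : R, g ⟨c, hRS c.2⟩ = c := fun c => Subtype.ext (hfix c c.2)
  simpa only [e] using hg _ _ (hS.preconnected ⟨a, hRS a.2⟩ ⟨b, hRS b.2⟩)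

theorem SimpleGraph.Connected.induce_sdiff_singleton_of_leaf [DecidableEq V] {S : Set V}
    {u v : V} (hS : (G.induce S).Connected) (hv : v ∈ S) (hu : u ∈ S) (hvu : G.Adj v u)
    (hleaf : ∀ w ∈ S, G.Adj v w → w = u) : (G.induce (S \ {v})).Connected := by
  refine induce_connected_of_retraction (fun x => if x = v then u else x) ?_ ?_
    Set.sdiff_subset ?_ hS
  · intro x hx
    split_ifs with h
    · exact ⟨hu, hvu.ne.symm⟩
    · exact ⟨hx, h⟩
  · intro x hx
    exact if_neg hx.2
  · intro x hx y hy hxy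
    by_cases hxv : x = v <;> by_cases hyv : y = v
    · exact absurd (hxv.trans hyv.symm) hxy.ne
    · subst hxv; simp [hleaf y hy hxy]
    · subst hyv; simp [hleaf x hx hxy.symm]
    · simp [hxv, hyv, hxy]

theorem PastingConstructible.insert_leaf {A : Set V} {u v : V}
    (hA : PastingConstructible G A) (hu : u ∈ A) (hv : v ∉ A) (hvu : G.Adj v u)
    (hleaf : ∀ w ∈ A, G.Adj v w → w = u) : PastingConstructible G (insert v A) := by
  have hunion : insert v A = A ∪ {v, u} := by
    rw [Set.union_insert, Set.union_singleton, Set.insert_eq_of_mem hu]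
  rw [hunion]
  refine .paste _ _ hA (.edge hvu) (Or.inl ⟨u, ?_⟩) ?_
  · ext w
    constructor
    · rintro ⟨hw, rfl | rfl⟩
      exacts [absurd hw hv, rfl]
    · rintro rfl
      exact ⟨hu, Or.inr rfl⟩
  · rintro a ⟨ha, ha'⟩ b ⟨rfl | rfl, hb⟩ hab
    · exact ha' (by simp [hleaf a ha hab.symm])
    · exact hb hu

theorem isSubsquare_iff_exists_embedding {T : Set V} :
    IsSubsquare G T ↔ ∃ f : cycleGraph 4 ↪g G, Set.range f = T := by
  constructor
  · rintro ⟨e⟩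
    exact ⟨(Embedding.induce T).comp e.symm.toEmbedding,
      (e.symm.surjective.range_comp _).trans Subtype.range_coe⟩
  · rintro ⟨f, rfl⟩
    exact ⟨f.isoInduceRange.symm⟩

end Pasting

theorem Set.exists_pair_inter_eq_singleton {α : Type*} {u v : α} {T : Set α}
    (hne : ({u, v} ∩ T).Nonempty) (hsub : ¬ {u, v} ⊆ T) : ∃ w, {u, v} ∩ T = {w} := by
  rw [Set.pair_subset_iff, not_and_or] at hsub
  by_cases hu : u ∈ T <;> by_cases hv : v ∈ T
  · exact (hsub.elim (· hu) (· hv)).elim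
  · exact ⟨u, by ext; aesop⟩
  · exact ⟨v, by ext; aesop⟩
  · obtain ⟨w, rfl | rfl, hw⟩ := hne <;> contradiction

section Ladder

variable {n : ℕ}

theorem ladderGraph_adj {a b : Fin (2 * (n + 1))} :
    (ladderGraph n).Adj a b ↔ (a : ℕ) ≠ b ∧
      ((a : ℕ) / 2 = b / 2 ∨ (b : ℕ) = a + 2 ∨ (a : ℕ) = b + 2) := by
  rw [ladderGraph, fromRel_adj, Ne, Fin.ext_iff]
  refine and_congr_right fun hne => ⟨?_, fun h => ?_⟩
  · rintro ((⟨i, _⟩ | ⟨i, _⟩) | (⟨i, _⟩ | ⟨i, _⟩)) <;> omega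
  have := a.isLt
  have := b.isLt
  rcases Nat.lt_or_gt_of_ne hne with hlt | hlt <;> rcases h with h | h | h
  all_goals first
    | omega
    | (refine Or.inl (Or.inr ⟨(a : ℕ) / 2 + 1, ?_⟩); omega)
    | (refine Or.inl (Or.inl ⟨(a : ℕ) / 2 + 1, ?_⟩); omega)
    | (refine Or.inr (Or.inr ⟨(b : ℕ) / 2 + 1, ?_⟩); omega)
    | (refine Or.inr (Or.inl ⟨(b : ℕ) / 2 + 1, ?_⟩); omega)

-- The square between the rungs `m` and `m + 1`, where rung `i` is `{2i, 2i+1}`.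
def ladderSquare (n m : ℕ) : Set (Fin (2 * (n + 1))) :=
  {x | 2 * m ≤ (x : ℕ) ∧ (x : ℕ) ≤ 2 * m + 3}

theorem isSubsquare_ladderSquare {m : ℕ} (hm : m < n) :
    IsSubsquare (ladderGraph n) (ladderSquare n m) := by
  -- the offsets of the square's vertices in cyclic order
  let c : Fin 4 → ℕ := ![0, 1, 3, 2]
  have hc : ∀ k, c k ≤ 3 := by decide
  let f : Fin 4 → Fin (2 * (n + 1)) := fun k => ⟨2 * m + c k, by have := hc k; omega⟩
  have hinj : Function.Injective f := fun i j h => by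
    have key : ∀ i j, c i = c j → i = j := by decide
    exact key i j (by simpa [f, Fin.ext_iff] using h)
  have hadj : ∀ {i j}, (ladderGraph n).Adj (f i) (f j) ↔ (cycleGraph 4).Adj i j := by
    intro i j
    have hcyc : ∀ i j : Fin 4, (cycleGraph 4).Adj i j ↔
        c i ≠ c j ∧ (c i / 2 = c j / 2 ∨ c j = c i + 2 ∨ c i = c j + 2) := by
      simp only [cycleGraph_adj]; decide
    rw [ladderGraph_adj, hcyc]
    have := hc i; have := hc j
    simp only [f]
    omega
  refine isSubsquare_iff_exists_embedding.mpr ⟨⟨⟨f, hinj⟩, hadj⟩, ?_⟩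
  ext x
  simp only [RelEmbedding.coe_mk, Function.Embedding.coeFn_mk, Set.mem_range, Fin.ext_iff,
    Fin.exists_fin_succ, Matrix.cons_val_zero, Matrix.cons_val_succ, Matrix.cons_val_fin_one,
    exists_const, ladderSquare, Set.mem_ofPred_eq, f, c]
  omega

theorem IsSubsquare.exists_eq_ladderSquare {T : Set (Fin (2 * (n + 1)))}
    (hT : IsSubsquare (ladderGraph n) T) : ∃ m < n, T = ladderSquare n m := by
  obtain ⟨f, rfl⟩ := isSubsquare_iff_exists_embedding.mp hT
  have adj : ∀ i j, (cycleGraph 4).Adj i j → (ladderGraph n).Adj (f i) (f j) :=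
    fun i j h => f.map_adj_iff.mpr h
  have h01 := ladderGraph_adj.mp (adj 0 1 (by decide))
  have h12 := ladderGraph_adj.mp (adj 1 2 (by decide))
  have h23 := ladderGraph_adj.mp (adj 2 3 (by decide))
  have h30 := ladderGraph_adj.mp (adj 3 0 (by decide))
  have h02 : (f 0 : ℕ) ≠ f 2 := Fin.val_ne_of_ne (f.injective.ne (by decide))
  have h13 : (f 1 : ℕ) ≠ f 3 := Fin.val_ne_of_ne (f.injective.ne (by decide))
  have := (f 0).isLt; have := (f 1).isLt; have := (f 2).isLt; have := (f 3).isLt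
  -- every 4-cycle of the ladder is a square
  obtain ⟨m, hm⟩ : ∃ m, ∀ x : ℕ,
      (x = f 0 ∨ x = f 1 ∨ x = f 2 ∨ x = f 3) ↔ 2 * m ≤ x ∧ x ≤ 2 * m + 3 :=
    ⟨min (min (f 0 : ℕ) (f 1)) (min (f 2) (f 3)) / 2, fun x => by omega⟩
  refine ⟨m, by have := hm (2 * m + 3); omega, ?_⟩
  ext x
  simp [ladderSquare, Fin.exists_fin_succ, Fin.ext_iff, eq_comm, ← hm]

theorem exists_adj_ladderSquare_inter_eq {m₁ m₂ : ℕ} (hm₂ : m₂ < n) (hlt : m₁ < m₂)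
    (hne : (ladderSquare n m₁ ∩ ladderSquare n m₂).Nonempty) :
    ∃ u v, (ladderGraph n).Adj u v ∧ ladderSquare n m₁ ∩ ladderSquare n m₂ = {u, v} := by
  obtain ⟨x, ⟨hx₁, hx₁'⟩, hx₂, hx₂'⟩ := hne
  refine ⟨⟨2 * m₂, by omega⟩, ⟨2 * m₂ + 1, by omega⟩,
    ladderGraph_adj.mpr (by dsimp only; omega), ?_⟩
  ext y
  simp only [ladderSquare, Set.mem_inter_iff, Set.mem_ofPred_eq, Set.mem_insert_iff,
    Set.mem_singleton_iff, Fin.ext_iff]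
  omega

theorem IsSubsquare.exists_adj_inter_eq {T₁ T₂ : Set (Fin (2 * (n + 1)))}
    (h₁ : IsSubsquare (ladderGraph n) T₁) (h₂ : IsSubsquare (ladderGraph n) T₂)
    (hne : T₁ ≠ T₂) (hint : (T₁ ∩ T₂).Nonempty) :
    ∃ u v, (ladderGraph n).Adj u v ∧ T₁ ∩ T₂ = {u, v} := by
  obtain ⟨m₁, hm₁, rfl⟩ := h₁.exists_eq_ladderSquare
  obtain ⟨m₂, hm₂, rfl⟩ := h₂.exists_eq_ladderSquare
  rcases lt_or_gt_of_ne (ne_of_apply_ne _ hne) with hlt | hlt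
  · exact exists_adj_ladderSquare_inter_eq hm₂ hlt hint
  · rw [Set.inter_comm] at hint ⊢
    exact exists_adj_ladderSquare_inter_eq hm₁ hlt hint

theorem exists_ladderSquare_top {S : Set (Fin (2 * (n + 1)))} (hS : S.Nonempty)
    (hdeg : ∀ v ∈ S, ∃ u₁ ∈ S, ∃ u₂ ∈ S,
      u₁ ≠ u₂ ∧ (ladderGraph n).Adj v u₁ ∧ (ladderGraph n).Adj v u₂) :
    ∃ m < n, ladderSquare n m ⊆ S ∧ ∀ x ∈ S, (x : ℕ) ≤ 2 * m + 3 := by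
  -- the rightmost vertex `a` has two neighbours only if `a = 2m+3`; then `a - 1` needs `a - 3`
  obtain ⟨a, ha, hmax⟩ := S.exists_max_image (fun x => (x : ℕ)) S.toFinite hS
  obtain ⟨u₁, hu₁, u₂, hu₂, hu, hau₁, hau₂⟩ := hdeg a ha
  rw [ladderGraph_adj] at hau₁ hau₂
  have := hmax u₁ hu₁
  have := hmax u₂ hu₂
  have := Fin.val_ne_of_ne hu
  obtain ⟨p, hp, hpa, q, hq, hqa⟩ : ∃ p ∈ S, (p : ℕ) = a - 1 ∧ ∃ q ∈ S, (q : ℕ) = a - 2 := by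
    rcases (by omega : (u₁ : ℕ) = a - 1 ∧ (u₂ : ℕ) = a - 2 ∨
      (u₂ : ℕ) = a - 1 ∧ (u₁ : ℕ) = a - 2) with h | h
    exacts [⟨u₁, hu₁, h.1, u₂, hu₂, h.2⟩, ⟨u₂, hu₂, h.1, u₁, hu₁, h.2⟩]
  obtain ⟨w₁, hw₁, w₂, hw₂, hw, hpw₁, hpw₂⟩ := hdeg p hp
  rw [ladderGraph_adj] at hpw₁ hpw₂
  have := hmax w₁ hw₁
  have := hmax w₂ hw₂
  have := Fin.val_ne_of_ne hw
  obtain ⟨r, hr, hra⟩ : ∃ r ∈ S, (r : ℕ) = a - 3 := by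
    rcases (by omega : (w₁ : ℕ) = a - 3 ∨ (w₂ : ℕ) = a - 3) with h | h
    exacts [⟨w₁, hw₁, h⟩, ⟨w₂, hw₂, h⟩]
  have := a.isLt
  refine ⟨(a - 3) / 2, by omega, fun x ⟨hx, hx'⟩ => ?_,
    fun x hx => by have := hmax x hx; omega⟩
  obtain rfl | rfl | rfl | rfl : x = a ∨ x = p ∨ x = q ∨ x = r := by
    simp only [Fin.ext_iff]; omega
  all_goals assumption

theorem connected_induce_below_of_ladderSquare_top {S : Set (Fin (2 * (n + 1)))} {m : ℕ}
    (hsq : ladderSquare n m ⊆ S) (htop : ∀ x ∈ S, (x : ℕ) ≤ 2 * m + 3)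
    (hS : ((ladderGraph n).induce S).Connected) :
    ((ladderGraph n).induce {x ∈ S | (x : ℕ) < 2 * m + 2}).Connected := by
  -- fold the rung `m + 1` onto the rung `m`
  let f : Fin (2 * (n + 1)) → Fin (2 * (n + 1)) := fun x =>
    if 2 * m + 2 ≤ (x : ℕ) then ⟨x - 2, by have := x.isLt; omega⟩ else x
  have hf : ∀ x, (f x : ℕ) = if 2 * m + 2 ≤ (x : ℕ) then (x : ℕ) - 2 else x := fun x => by
    simp only [f]; split_ifs <;> rfl
  refine induce_connected_of_retraction f (fun x hx => ?_)
    (fun x hx => Fin.ext (by rw [hf, if_neg (by simpa using hx.2)])) (Set.sep_subset _ _)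
    (fun x hx y hy hxy => ?_) hS
  · have := htop x hx
    by_cases h : 2 * m + 2 ≤ (x : ℕ)
    · have hfx := hf x
      rw [if_pos h] at hfx
      exact ⟨hsq ⟨by omega, by omega⟩, by omega⟩
    · simp only [f, if_neg h]
      exact ⟨hx, by omega⟩
  · have := htop x hx
    have := htop y hy
    rw [ladderGraph_adj] at hxy ⊢
    rw [Fin.ext_iff, hf, hf]
    split_ifs <;> omega

theorem PastingConstructible.of_ladderSquare_top {S : Set (Fin (2 * (n + 1)))} {m : ℕ}
    (hm : m < n) (hsq : ladderSquare n m ⊆ S) (htop : ∀ x ∈ S, (x : ℕ) ≤ 2 * m + 3)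
    (h : PastingConstructible (ladderGraph n) {x ∈ S | (x : ℕ) < 2 * m + 2}) :
    PastingConstructible (ladderGraph n) S := by
  have hsplit : S = {x ∈ S | (x : ℕ) < 2 * m + 2} ∪ ladderSquare n m := by
    ext x
    constructor
    · intro hx
      by_cases h : (x : ℕ) < 2 * m + 2
      exacts [Or.inl ⟨hx, h⟩, Or.inr ⟨by omega, htop x hx⟩]
    · rintro (⟨hx, -⟩ | hx)
      exacts [hx, hsq hx]
  rw [hsplit]
  refine .paste _ _ h (.square _ (isSubsquare_ladderSquare hm)) (Or.inr ⟨⟨2 * m, by omega⟩,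
    ⟨2 * m + 1, by omega⟩, ladderGraph_adj.mpr (by dsimp only; omega), ?_⟩) ?_
  · ext x
    simp only [Set.mem_inter_iff, Set.mem_insert_iff, Set.mem_singleton_iff, Fin.ext_iff]
    constructor
    · rintro ⟨⟨-, h⟩, h', -⟩
      omega
    · intro h
      have hx : x ∈ ladderSquare n m := ⟨by omega, by omega⟩
      exact ⟨⟨hsq hx, by omega⟩, hx⟩
  · rintro x ⟨⟨-, hx⟩, hx'⟩ y ⟨hy, hy'⟩ hxy
    have : ¬ (y : ℕ) < 2 * m + 2 := fun h => hy' ⟨hsq hy, h⟩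
    rw [ladderGraph_adj] at hxy
    exact hx' ⟨by obtain ⟨hy₁, hy₂⟩ := hy; omega, by omega⟩

theorem pastingConstructible_of_connected_ladder {S : Set (Fin (2 * (n + 1)))}
    (hS : ((ladderGraph n).induce S).Connected) : PastingConstructible (ladderGraph n) S := by
  induction hk : S.ncard using Nat.strong_induction_on generalizing S with
  | _ k ih =>
  subst hk
  obtain ⟨⟨v₀, hv₀⟩⟩ := hS.nonempty
  rcases S.subsingleton_or_nontrivial with hsub | hnt
  · rw [hsub.eq_singleton_of_mem hv₀]
    exact .vertex v₀
  by_cases hleaf : ∃ v ∈ S, ∃ u ∈ S,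
      (ladderGraph n).Adj v u ∧ ∀ w ∈ S, (ladderGraph n).Adj v w → w = u
  · obtain ⟨v, hv, u, hu, hvu, huniq⟩ := hleaf
    have hA := ih _ (Set.ncard_sdiff_singleton_lt_of_mem hv)
      (hS.induce_sdiff_singleton_of_leaf hv hu hvu huniq) rfl
    rw [← Set.insert_sdiff_self_of_mem hv]
    exact hA.insert_leaf ⟨hu, hvu.ne.symm⟩ (fun h => h.2 rfl) hvu (fun w hw => huniq w hw.1)
  push Not at hleaf
  have hdeg : ∀ v ∈ S, ∃ u₁ ∈ S, ∃ u₂ ∈ S,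
      u₁ ≠ u₂ ∧ (ladderGraph n).Adj v u₁ ∧ (ladderGraph n).Adj v u₂ := by
    intro v hv
    have := hnt.coe_sort
    obtain ⟨⟨u, hu⟩, hvu⟩ := hS.preconnected.exists_adj_of_nontrivial ⟨v, hv⟩
    obtain ⟨w, hw, hvw, hwu⟩ := hleaf v hv u hu hvu
    exact ⟨w, hw, u, hu, hwu, hvw, hvu⟩
  obtain ⟨m, hm, hsq, htop⟩ := exists_ladderSquare_top hnt.nonempty hdeg
  refine .of_ladderSquare_top hm hsq htop
    (ih _ (Set.ncard_lt_ncard ?_) (connected_induce_below_of_ladderSquare_top hsq htop hS) rfl)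
  refine (Set.ssubset_iff_of_subset (Set.sep_subset _ _)).mpr
    ⟨⟨2 * m + 3, by omega⟩, hsq ⟨by simp, by simp⟩, by simp⟩

end Ladder

/-- Every connected induced subgraph of the ladder graph `Q_n` is
constructible by pasting along single vertices or single edges starting from
vertices, edges and subsquares; moreover two distinct intersecting subsquares of an
induced subgraph meet in a common edge, and a subsquare and an edge not contained in
any subsquare meet in (at most) a single vertex. -/
theorem stmt6 (n : ℕ) :
    (∀ S : Set (Fin (2 * (n + 1))),
      ((ladderGraph n).induce S).Connected → PastingConstructible (ladderGraph n) S) ∧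
    (∀ (S T₁ T₂ : Set (Fin (2 * (n + 1)))), T₁ ⊆ S → T₂ ⊆ S →
      IsSubsquare (ladderGraph n) T₁ → IsSubsquare (ladderGraph n) T₂ →
      T₁ ≠ T₂ → (T₁ ∩ T₂).Nonempty →
      ∃ u v, (ladderGraph n).Adj u v ∧ T₁ ∩ T₂ = {u, v}) ∧
    (∀ (S T : Set (Fin (2 * (n + 1)))) (u v : Fin (2 * (n + 1))), T ⊆ S →
      IsSubsquare (ladderGraph n) T → (ladderGraph n).Adj u v →
      ({u, v} : Set (Fin (2 * (n + 1)))) ⊆ S →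
      (¬ ∃ T', T' ⊆ S ∧ IsSubsquare (ladderGraph n) T' ∧
        ({u, v} : Set (Fin (2 * (n + 1)))) ⊆ T') →
      (({u, v} : Set (Fin (2 * (n + 1)))) ∩ T).Nonempty →
      ∃ w, ({u, v} : Set (Fin (2 * (n + 1)))) ∩ T = {w}) := by
  refine ⟨fun S hS => pastingConstructible_of_connected_ladder hS,
    fun S T₁ T₂ _ _ h₁ h₂ hne hint => h₁.exists_adj_inter_eq h₂ hne hint,
    fun S T u v hTS hT _ _ hnot hint => ?_⟩
  exact Set.exists_pair_inter_eq_singleton hint fun huv => hnot ⟨T, hTS, hT, huv⟩
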